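/- The operator T_θ on H ⊕ ℂ is bijective, and its inverse is given explicitly by T_θ⁻¹(x,z) = exp(−iθ)·(A(U*(x)) − z·ξ, −⟨x, U ξ⟩ + a·z) for all (x,z) ∈ H ⊕ ℂ, where U* is the adjoint of U. -/

import Mathlib

open scoped InnerProductSpace

noncomputable section

variable {H : Type*} [NormedAddCommGroup H] [InnerProductSpace ℂ H]

/-- The vector `(x, z)` of the Hilbert space direct sum `H ⊕ ℂ`. -/
def mkE (x : H) (z : ℂ) : WithLp 2 (H × ℂ) := (WithLp.equiv 2 (H × ℂ)).symm (x, z)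

/-!
Factor `T_θ = e^{iθ} (U ⊕ 1) M` with the block operator `M = [[A, ξ], [ξ*, a]]`. From
`A² = 1 + ξ ξ*`, `A ξ = a ξ` and `a² = 1 + ‖ξ‖²` one checks that `[[A, -ξ], [-ξ*, a]]` is a
two-sided inverse of `M`, while `U ⊕ 1` is inverted by `U* ⊕ 1`.
-/

open ContinuousLinearMap (adjoint)

section RankOnePerturbation

variable {ξ : H} {a : ℝ} {A : H →L[ℂ] H}

lemma perturbation_coeff_mul_inner_self (hξ : ξ ≠ 0) :
    ((((a - 1) / ‖ξ‖ ^ 2 : ℝ) : ℂ)) * ⟪ξ, ξ⟫_ℂ = a - 1 := by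
  have hn : (‖ξ‖ : ℂ) ≠ 0 := by exact_mod_cast norm_ne_zero_iff.mpr hξ
  rw [show ⟪ξ, ξ⟫_ℂ = ((‖ξ‖ ^ 2 : ℝ) : ℂ) by exact_mod_cast inner_self_eq_norm_sq_to_K ξ]
  push_cast
  field_simp

lemma inner_apply_of_perturbation (hξ : ξ ≠ 0)
    (hA : ∀ x : H, A x = x + ((((a - 1) / ‖ξ‖ ^ 2 : ℝ) : ℂ) * ⟪ξ, x⟫_ℂ) • ξ) (x : H) :
    ⟪ξ, A x⟫_ℂ = a * ⟪ξ, x⟫_ℂ := by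
  rw [hA, inner_add_right, inner_smul_right]
  linear_combination ⟪ξ, x⟫_ℂ * perturbation_coeff_mul_inner_self (a := a) hξ

lemma apply_self_of_perturbation (hξ : ξ ≠ 0)
    (hA : ∀ x : H, A x = x + ((((a - 1) / ‖ξ‖ ^ 2 : ℝ) : ℂ) * ⟪ξ, x⟫_ℂ) • ξ) :
    A ξ = (a : ℂ) • ξ := by
  rw [hA, perturbation_coeff_mul_inner_self hξ]
  module

lemma apply_apply_of_perturbation (hξ : ξ ≠ 0) (ha : a ^ 2 = 1 + ‖ξ‖ ^ 2)
    (hA : ∀ x : H, A x = x + ((((a - 1) / ‖ξ‖ ^ 2 : ℝ) : ℂ) * ⟪ξ, x⟫_ℂ) • ξ) (x : H) :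
    A (A x) = x + ⟪ξ, x⟫_ℂ • ξ := by
  have hc : ((a : ℂ) - 1) / (‖ξ‖ : ℂ) ^ 2 * (1 + a) = 1 := by
    have hn : (‖ξ‖ : ℂ) ≠ 0 := by exact_mod_cast norm_ne_zero_iff.mpr hξ
    field_simp
    linear_combination (by exact_mod_cast ha : (a : ℂ) ^ 2 = 1 + (‖ξ‖ : ℂ) ^ 2)
  rw [hA (A x), inner_apply_of_perturbation hξ hA, hA x]
  match_scalars
  · ring
  · linear_combination ⟪ξ, x⟫_ℂ * hc

end RankOnePerturbation

section BlockOperator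

variable (A : H →L[ℂ] H) (ξ : H) (a : ℝ)

def blockOp (p : H × ℂ) : H × ℂ := (A p.1 + p.2 • ξ, ⟪ξ, p.1⟫_ℂ + a * p.2)

def blockInv (p : H × ℂ) : H × ℂ := (A p.1 - p.2 • ξ, -⟪ξ, p.1⟫_ℂ + a * p.2)

variable {A ξ a}

lemma blockOp_blockInv (hξ : ξ ≠ 0) (ha : a ^ 2 = 1 + ‖ξ‖ ^ 2)
    (hA : ∀ x : H, A x = x + ((((a - 1) / ‖ξ‖ ^ 2 : ℝ) : ℂ) * ⟪ξ, x⟫_ℂ) • ξ) (p : H × ℂ) :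
    blockOp A ξ a (blockInv A ξ a p) = p := by
  ext
  · simp only [blockOp, blockInv, map_sub, map_smul, apply_apply_of_perturbation hξ ha hA,
      apply_self_of_perturbation hξ hA]
    module
  · simp only [blockOp, blockInv, inner_sub_right, inner_smul_right,
      inner_apply_of_perturbation hξ hA, inner_self_eq_norm_sq_to_K]
    linear_combination p.2 * (by exact_mod_cast ha : (a : ℂ) ^ 2 = 1 + (‖ξ‖ : ℂ) ^ 2)

lemma blockInv_blockOp (hξ : ξ ≠ 0) (ha : a ^ 2 = 1 + ‖ξ‖ ^ 2)
    (hA : ∀ x : H, A x = x + ((((a - 1) / ‖ξ‖ ^ 2 : ℝ) : ℂ) * ⟪ξ, x⟫_ℂ) • ξ) (p : H × ℂ) :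
    blockInv A ξ a (blockOp A ξ a p) = p := by
  ext
  · simp only [blockOp, blockInv, map_add, map_smul, apply_apply_of_perturbation hξ ha hA,
      apply_self_of_perturbation hξ hA]
    module
  · simp only [blockOp, blockInv, inner_add_right, inner_smul_right,
      inner_apply_of_perturbation hξ hA, inner_self_eq_norm_sq_to_K]
    linear_combination p.2 * (by exact_mod_cast ha : (a : ℂ) ^ 2 = 1 + (‖ξ‖ : ℂ) ^ 2)

end BlockOperator

section Unitary

variable [CompleteSpace H] {U : H →L[ℂ] H}

lemma adjoint_apply_apply_of_mem_unitary (hU : U ∈ unitary (H →L[ℂ] H)) (x : H) :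
    adjoint U (U x) = x := by
  simpa [ContinuousLinearMap.star_eq_adjoint] using congr($(Unitary.star_mul_self_of_mem hU) x)

lemma apply_adjoint_apply_of_mem_unitary (hU : U ∈ unitary (H →L[ℂ] H)) (x : H) :
    U (adjoint U x) = x := by
  simpa [ContinuousLinearMap.star_eq_adjoint] using congr($(Unitary.mul_star_self_of_mem hU) x)

end Unitary

theorem stmt4 [CompleteSpace H]
    (ξ : H) (hξ : ξ ≠ 0) (a : ℝ) (ha : a = Real.sqrt (1 + ‖ξ‖ ^ 2))
    (A : H →L[ℂ] H)
    (hA : ∀ x : H, A x = x + ((((a - 1) / ‖ξ‖ ^ 2 : ℝ) : ℂ) * ⟪ξ, x⟫_ℂ) • ξ)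
    (U : H →L[ℂ] H) (hU : U ∈ unitary (H →L[ℂ] H)) (θ : ℝ)
    (T : WithLp 2 (H × ℂ) →L[ℂ] WithLp 2 (H × ℂ))
    (hT : ∀ (x : H) (z : ℂ),
      T (mkE x z) =
        Complex.exp (θ * Complex.I) • mkE (U (A x) + z • U ξ) (⟪ξ, x⟫_ℂ + (a : ℂ) * z)) :
    Function.Bijective T ∧
      ∀ (x : H) (z : ℂ),
        T (Complex.exp (-(θ * Complex.I)) •
            mkE (A (ContinuousLinearMap.adjoint U x) - z • ξ) (-⟪U ξ, x⟫_ℂ + (a : ℂ) * z)) =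
          mkE x z := by
  have ha2 : a ^ 2 = 1 + ‖ξ‖ ^ 2 := by rw [ha, Real.sq_sqrt (by positivity)]
  have hexp : Complex.exp (-(θ * Complex.I)) * Complex.exp (θ * Complex.I) = 1 := by
    rw [← Complex.exp_add, neg_add_cancel, Complex.exp_zero]
  set e := Complex.exp (θ * Complex.I)
  let S (p : WithLp 2 (H × ℂ)) : WithLp 2 (H × ℂ) := Complex.exp (-(θ * Complex.I)) •
    mkE (A (adjoint U p.fst) - p.snd • ξ) (-⟪U ξ, p.fst⟫_ℂ + (a : ℂ) * p.snd)
  have hTS (x : H) (z : ℂ) : T (Complex.exp (-(θ * Complex.I)) •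
      mkE (A (adjoint U x) - z • ξ) (-⟪U ξ, x⟫_ℂ + (a : ℂ) * z)) = mkE x z := by
    have h := blockOp_blockInv hξ ha2 hA (adjoint U x, z)
    simp only [blockOp, blockInv, ContinuousLinearMap.adjoint_inner_right, Prod.ext_iff] at h
    rw [map_smul, hT, smul_smul, hexp, one_smul, ← map_smul, ← map_add, h.1, h.2,
      apply_adjoint_apply_of_mem_unitary hU]
  have hST (x : H) (z : ℂ) : S (T (mkE x z)) = mkE x z := by
    have h := blockInv_blockOp hξ ha2 hA (x, z)
    simp only [blockOp, blockInv, Prod.ext_iff] at h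
    rw [hT, ← map_smul, ← map_add]
    simp only [S, mkE, WithLp.equiv_symm_apply, WithLp.smul_fst, WithLp.smul_snd,
      WithLp.toLp_fst, WithLp.toLp_snd, map_smul, inner_smul_right, smul_eq_mul,
      ContinuousLinearMap.inner_map_map_of_mem_unitary hU, adjoint_apply_apply_of_mem_unitary hU]
    rw [mul_smul, ← smul_sub, h.1, ← mul_neg e, mul_left_comm, ← mul_add, h.2, ← smul_eq_mul e z,
      ← Prod.smul_mk, WithLp.toLp_smul, smul_smul, hexp, one_smul]
  exact ⟨Function.bijective_iff_has_inverse.mpr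
    ⟨S, fun p => hST p.fst p.snd, fun p => hTS p.fst p.snd⟩, hTS⟩

end
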